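/- High-probability lower bound on the expected objective: define J̄ = J̌ + Ĵ where J̌ = (1/C_ω) Σ_{t=T-α+1}^{T} ω^{T-t} γ^{t-T+α-1} r_t and Ĵ = Σ_{t=T-α+1}^{T} ω^{T-t} r_t · [ Σ_{s=T+1}^{T+β} γ^{s-T-1} ν_s(θ_t) ] / [ Σ_{k=T-α+1}^{T} ω^{T-k} ν_k(θ_t) ], and define B = ( Σ_{s=T+1}^{T+β} γ^{s-T-1} · ( Σ_{t=T-α+1}^{T} ω^{T-t} / d₂(ν_s ‖ ν_t) )^{-1/2} )². Then for every δ ∈ (0,1), with probability at least 1−δ it holds that E[J̄] ≥ J̄ − √( ((1−δ)/δ) · 2 R_max² · ( C_γ(α)² + C_ω · B ) ). -/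

import Mathlib

open MeasureTheory ProbabilityTheory Finset

/-!
Write `J̄ = J̌ + ∑ⱼ ωʲ rⱼ w(θⱼ)` with importance weight `w = G / D`, where `G = ∑ᵢ γⁱ ν_{T+1+i}` is
the target mixture and `D = ∑ₖ ωᵏ ν_{T-k}` the behavioural one. Since `|rⱼ| ≤ R`, Cauchy–Schwarz
gives `J̄² ≤ 2R² (C_γ² + C_ω ∑ⱼ ωʲ w(θⱼ)²)`, and `θⱼ ∼ ν_{T-j}` makes the expectation of the last
sum equal to `∫ G² / D dμ`. Minkowski's inequality in `L²(μ / D)`, together with the weighted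
harmonic-mean bound `∫ ν_s² / D ≤ (∑ₜ ω^{T-t} / d₂(ν_s ‖ ν_t))⁻¹`, bounds this integral by `B`.
Hence `Var J̄ ≤ 2R² (C_γ² + C_ω B)`, and Cantelli's one-sided inequality yields the claim.
-/

lemma ite_eq_sum_range_pow {x : ℝ} (hx : x ≤ 1) (n : ℕ) :
    (if x < 1 then (1 - x ^ n) / (1 - x) else (n : ℝ)) = ∑ i ∈ range n, x ^ i := by
  split_ifs with h
  · rw [geom_sum_eq h.ne, ← neg_div_neg_eq, neg_sub, neg_sub]
  · simp [le_antisymm hx (not_lt.1 h)]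

lemma sq_sum_mul_mul_le {ι : Type*} (s : Finset ι) {lam r w : ι → ℝ} {R : ℝ}
    (hlam : ∀ j ∈ s, 0 ≤ lam j) (hr : ∀ j ∈ s, |r j| ≤ R) :
    (∑ j ∈ s, lam j * r j * w j) ^ 2 ≤ R ^ 2 * ((∑ j ∈ s, lam j) * ∑ j ∈ s, lam j * w j ^ 2) := by
  calc (∑ j ∈ s, lam j * r j * w j) ^ 2
      ≤ (∑ j ∈ s, lam j) * ∑ j ∈ s, lam j * (r j * w j) ^ 2 :=
        sum_sq_le_sum_mul_sum_of_sq_le_mul s hlam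
          (fun j hj => mul_nonneg (hlam j hj) (sq_nonneg _)) (fun j _ => le_of_eq (by ring))
    _ ≤ (∑ j ∈ s, lam j) * ∑ j ∈ s, lam j * (R ^ 2 * w j ^ 2) := by
        gcongr with j hj
        · exact sum_nonneg hlam
        · exact hlam j hj
        · rw [mul_pow]
          exact mul_le_mul_of_nonneg_right (sq_le_sq' (abs_le.1 (hr j hj)).1
            (abs_le.1 (hr j hj)).2) (sq_nonneg _)
    _ = R ^ 2 * ((∑ j ∈ s, lam j) * ∑ j ∈ s, lam j * w j ^ 2) := by
        simp_rw [mul_left_comm (lam _) (R ^ 2), ← mul_sum]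
        ring

lemma abs_sum_pow_mul_pow_mul_le {α : ℕ} {γ ω R : ℝ} (hγ : 0 ≤ γ) (hω0 : 0 ≤ ω) (hω1 : ω ≤ 1)
    {r : ℕ → ℝ} (hr : ∀ j ∈ range α, |r j| ≤ R) :
    |∑ j ∈ range α, ω ^ j * γ ^ (α - 1 - j) * r j| ≤ R * ∑ j ∈ range α, γ ^ j := by
  calc |∑ j ∈ range α, ω ^ j * γ ^ (α - 1 - j) * r j|
      ≤ ∑ j ∈ range α, γ ^ (α - 1 - j) * R := by
        refine (abs_sum_le_sum_abs _ _).trans (sum_le_sum fun j hj => ?_)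
        rw [abs_mul, abs_mul, abs_of_nonneg (pow_nonneg hω0 j), abs_of_nonneg (pow_nonneg hγ _),
          mul_comm (ω ^ j), mul_assoc]
        gcongr
        calc ω ^ j * |r j| ≤ 1 * R :=
              mul_le_mul (pow_le_one₀ hω0 hω1) (hr j hj) (abs_nonneg _) zero_le_one
          _ = R := one_mul R
    _ = R * ∑ j ∈ range α, γ ^ j := by
        rw [← sum_mul, sum_range_reflect (fun j => γ ^ j) α, mul_comm]

lemma sq_estimator_le {α : ℕ} (hα : 0 < α) {γ ω R : ℝ} (hγ : 0 ≤ γ) (hω0 : 0 < ω) (hω1 : ω ≤ 1)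
    {r w : ℕ → ℝ} (hr : ∀ j ∈ range α, |r j| ≤ R) :
    ((1 / ∑ j ∈ range α, ω ^ j) * ∑ j ∈ range α, ω ^ j * γ ^ (α - 1 - j) * r j
        + ∑ j ∈ range α, ω ^ j * r j * w j) ^ 2
      ≤ 2 * R ^ 2 * ((∑ j ∈ range α, γ ^ j) ^ 2
        + (∑ j ∈ range α, ω ^ j) * ∑ j ∈ range α, ω ^ j * w j ^ 2) := by
  have hR : 0 ≤ R := (abs_nonneg _).trans (hr 0 (mem_range.2 hα))
  have hC : 1 ≤ ∑ j ∈ range α, ω ^ j := by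
    simpa using single_le_sum (fun j _ => pow_nonneg hω0.le j) (mem_range.2 hα)
  have hfirst : ((1 / ∑ j ∈ range α, ω ^ j) * ∑ j ∈ range α, ω ^ j * γ ^ (α - 1 - j) * r j) ^ 2
      ≤ R ^ 2 * (∑ j ∈ range α, γ ^ j) ^ 2 := by
    rw [← mul_pow, ← sq_abs, abs_mul, abs_of_pos (by positivity)]
    refine pow_le_pow_left₀ (by positivity) ?_ 2
    calc 1 / (∑ j ∈ range α, ω ^ j) * |∑ j ∈ range α, ω ^ j * γ ^ (α - 1 - j) * r j|
        ≤ 1 * (R * ∑ j ∈ range α, γ ^ j) :=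
          mul_le_mul (div_le_one_of_le₀ hC (by positivity))
            (abs_sum_pow_mul_pow_mul_le hγ hω0.le hω1 hr) (abs_nonneg _) zero_le_one
      _ = R * ∑ j ∈ range α, γ ^ j := one_mul _
  have hsecond := sq_sum_mul_mul_le (range α) (w := w) (fun j _ => pow_nonneg hω0.le j) hr
  refine add_sq_le.trans ?_
  linarith

section MixtureDivergence

variable {Θ ι κ : Type*} [MeasurableSpace Θ] {μ : Measure Θ}

lemma integrable_and_integral_le_of_le {f g : Θ → ℝ} (hf : AEStronglyMeasurable f μ)
    (hf0 : ∀ x, 0 ≤ f x) (hg : Integrable g μ) (hfg : ∀ x, f x ≤ g x) :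
    Integrable f μ ∧ ∫ x, f x ∂μ ≤ ∫ x, g x ∂μ :=
  have hfi := hg.mono' hf (.of_forall fun x => (Real.norm_of_nonneg (hf0 x)).trans_le (hfg x))
  ⟨hfi, integral_mono hfi hg hfg⟩

lemma integral_sq_div_mixture_le {s : Finset ι} (hs : s.Nonempty) {c : ι → ℝ}
    (hc : ∀ j ∈ s, 0 < c j) {p : ι → Θ → ℝ} (hp : ∀ j ∈ s, Measurable (p j))
    (hp0 : ∀ j ∈ s, ∀ x, 0 < p j x) {f : Θ → ℝ} (hf : Measurable f)
    (hint : ∀ j ∈ s, Integrable (fun x => f x ^ 2 / p j x) μ)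
    (hd : ∀ j ∈ s, 0 < ∫ x, f x ^ 2 / p j x ∂μ) :
    Integrable (fun x => f x ^ 2 / ∑ j ∈ s, c j * p j x) μ ∧
      ∫ x, f x ^ 2 / ∑ j ∈ s, c j * p j x ∂μ ≤ (∑ j ∈ s, c j / ∫ x, f x ^ 2 / p j x ∂μ)⁻¹ := by
  set d : ι → ℝ := fun j => ∫ x, f x ^ 2 / p j x ∂μ
  set S := ∑ j ∈ s, c j / d j
  have hS : 0 < S := sum_pos (fun j hj => div_pos (hc j hj) (hd j hj)) hs
  -- Sedrakyan's lemma with the weights `c j / (d j * S)`, which sum to one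
  have hpt : ∀ x, f x ^ 2 / ∑ j ∈ s, c j * p j x ≤
      ∑ j ∈ s, c j / (d j * S) ^ 2 * (f x ^ 2 / p j x) := fun x => by
    have hsed := sq_sum_div_le_sum_sq_div s (fun j => c j / (d j * S))
      (fun j hj => mul_pos (hc j hj) (hp0 j hj x))
    have hone : ∑ j ∈ s, c j / (d j * S) = 1 := by
      simp_rw [div_mul_eq_div_div]
      rw [← sum_div, div_self hS.ne']
    rw [hone, one_pow] at hsed
    calc f x ^ 2 / ∑ j ∈ s, c j * p j x = f x ^ 2 * (1 / ∑ j ∈ s, c j * p j x) := by ring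
      _ ≤ f x ^ 2 * ∑ j ∈ s, (c j / (d j * S)) ^ 2 / (c j * p j x) :=
        mul_le_mul_of_nonneg_left hsed (sq_nonneg _)
      _ = _ := by
        rw [mul_sum]
        refine sum_congr rfl fun j hj => ?_
        have := (hc j hj).ne'
        have := (hp0 j hj x).ne'
        field_simp
  obtain ⟨hLHS, hle⟩ := integrable_and_integral_le_of_le
    ((hf.pow_const 2).div
      (Finset.measurable_sum _ fun j hj => (hp j hj).const_mul _)).aestronglyMeasurable
    (fun x => div_nonneg (sq_nonneg _)
      (sum_nonneg fun j hj => mul_nonneg (hc j hj).le (hp0 j hj x).le))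
    (integrable_finsetSum _ fun j hj => (hint j hj).const_mul _) hpt
  refine ⟨hLHS, hle.trans_eq ?_⟩
  rw [integral_finsetSum _ fun j hj => (hint j hj).const_mul _]
  simp_rw [integral_const_mul]
  calc ∑ j ∈ s, c j / (d j * S) ^ 2 * d j = S / S ^ 2 := by
        rw [sum_div]
        refine sum_congr rfl fun j hj => ?_
        have := (hd j hj).ne'
        field_simp
    _ = S⁻¹ := by rw [sq, div_mul_cancel_left₀ hS.ne']

/-- Minkowski's inequality in `L²(μ / D)`. -/
lemma integral_sq_sum_div_le {s : Finset ι} {a b : ι → ℝ} (ha : ∀ i ∈ s, 0 ≤ a i)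
    (hb : ∀ i ∈ s, 0 < b i) {f : ι → Θ → ℝ} {D : Θ → ℝ} (hf : ∀ i ∈ s, Measurable (f i))
    (hD : Measurable D) (hD0 : ∀ x, 0 ≤ D x)
    (hint : ∀ i ∈ s, Integrable (fun x => f i x ^ 2 / D x) μ)
    (hle : ∀ i ∈ s, ∫ x, f i x ^ 2 / D x ∂μ ≤ b i ^ 2) :
    Integrable (fun x => (∑ i ∈ s, a i * f i x) ^ 2 / D x) μ ∧
      ∫ x, (∑ i ∈ s, a i * f i x) ^ 2 / D x ∂μ ≤ (∑ i ∈ s, a i * b i) ^ 2 := by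
  set A := ∑ i ∈ s, a i * b i
  have hA : 0 ≤ A := sum_nonneg fun i hi => mul_nonneg (ha i hi) (hb i hi).le
  have hpt : ∀ x, (∑ i ∈ s, a i * f i x) ^ 2 / D x ≤
      A * ∑ i ∈ s, a i / b i * (f i x ^ 2 / D x) := fun x => by
    have hcs : (∑ i ∈ s, a i * f i x) ^ 2 ≤ A * ∑ i ∈ s, a i / b i * f i x ^ 2 :=
      sum_sq_le_sum_mul_sum_of_sq_le_mul s (fun i hi => mul_nonneg (ha i hi) (hb i hi).le)
        (fun i hi => mul_nonneg (div_nonneg (ha i hi) (hb i hi).le) (sq_nonneg _))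
        (fun i hi => le_of_eq (by have := (hb i hi).ne'; field_simp))
    calc (∑ i ∈ s, a i * f i x) ^ 2 / D x ≤ (A * ∑ i ∈ s, a i / b i * f i x ^ 2) / D x :=
          div_le_div_of_nonneg_right hcs (hD0 x)
      _ = _ := by simp_rw [mul_div_assoc, sum_div, mul_div_assoc]
  obtain ⟨hLHS, hle'⟩ := integrable_and_integral_le_of_le
    (((Finset.measurable_sum _ fun i hi => (hf i hi).const_mul _).pow_const 2).div
      hD).aestronglyMeasurable
    (fun x => div_nonneg (sq_nonneg _) (hD0 x))
    ((integrable_finsetSum _ fun i hi => (hint i hi).const_mul _).const_mul _) hpt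
  refine ⟨hLHS, hle'.trans ?_⟩
  rw [integral_const_mul, integral_finsetSum _ fun i hi => (hint i hi).const_mul _]
  simp_rw [integral_const_mul]
  calc A * ∑ i ∈ s, a i / b i * ∫ x, f i x ^ 2 / D x ∂μ ≤ A * ∑ i ∈ s, a i / b i * b i ^ 2 := by
        gcongr with i hi
        · exact div_nonneg (ha i hi) (hb i hi).le
        · exact hle i hi
    _ = A ^ 2 := by
        rw [sq A]
        congr 1
        refine sum_congr rfl fun i hi => ?_
        have := (hb i hi).ne'
        field_simp

lemma integral_sq_mixture_div_mixture_le {s : Finset ι} {t : Finset κ} (ht : t.Nonempty)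
    {a : ι → ℝ} (ha : ∀ i ∈ s, 0 ≤ a i) {c : κ → ℝ} (hc : ∀ j ∈ t, 0 < c j)
    {q : ι → Θ → ℝ} {p : κ → Θ → ℝ} (hq : ∀ i ∈ s, Measurable (q i))
    (hp : ∀ j ∈ t, Measurable (p j)) (hp0 : ∀ j ∈ t, ∀ x, 0 < p j x)
    (hint : ∀ i ∈ s, ∀ j ∈ t, Integrable (fun x => q i x ^ 2 / p j x) μ)
    (hd : ∀ i ∈ s, ∀ j ∈ t, 0 < ∫ x, q i x ^ 2 / p j x ∂μ) :
    Integrable (fun x => (∑ i ∈ s, a i * q i x) ^ 2 / ∑ j ∈ t, c j * p j x) μ ∧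
      ∫ x, (∑ i ∈ s, a i * q i x) ^ 2 / ∑ j ∈ t, c j * p j x ∂μ ≤
        (∑ i ∈ s, a i / √(∑ j ∈ t, c j / ∫ x, q i x ^ 2 / p j x ∂μ)) ^ 2 := by
  have hS : ∀ i ∈ s, 0 < ∑ j ∈ t, c j / ∫ x, q i x ^ 2 / p j x ∂μ := fun i hi =>
    sum_pos (fun j hj => div_pos (hc j hj) (hd i hi j hj)) ht
  have hsingle := fun i hi =>
    integral_sq_div_mixture_le ht hc hp hp0 (hq i hi) (hint i hi) (hd i hi)
  simp_rw [div_eq_mul_inv (a _)]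
  refine integral_sq_sum_div_le ha (fun i hi => inv_pos.2 (Real.sqrt_pos.2 (hS i hi))) hq
    (Finset.measurable_sum _ fun j hj => (hp j hj).const_mul _)
    (fun x => sum_nonneg fun j hj => mul_nonneg (hc j hj).le (hp0 j hj x).le)
    (fun i hi => (hsingle i hi).1) fun i hi => ?_
  rw [inv_pow, Real.sq_sqrt (hS i hi).le]
  exact (hsingle i hi).2

end MixtureDivergence

section ChangeOfVariables

variable {Θ Ω ι : Type*} [MeasurableSpace Θ] [MeasurableSpace Ω] {μ : Measure Θ} {P : Measure Ω}

lemma integrable_comp_of_map_eq_withDensity {X : Ω → Θ} {p h : Θ → ℝ} (hX : Measurable X)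
    (hp : Measurable p) (hp0 : ∀ x, 0 ≤ p x)
    (hlaw : P.map X = μ.withDensity fun x => ENNReal.ofReal (p x)) (hh : Measurable h)
    (hint : Integrable (fun x => p x * h x) μ) : Integrable (fun ω => h (X ω)) P := by
  refine (integrable_map_measure hh.aestronglyMeasurable hX.aemeasurable).1 ?_
  rw [hlaw, integrable_withDensity_iff_integrable_smul' hp.ennreal_ofReal (by simp)]
  simpa [ENNReal.toReal_ofReal (hp0 _)] using hint

lemma integral_comp_of_map_eq_withDensity {X : Ω → Θ} {p h : Θ → ℝ} (hX : Measurable X)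
    (hp : Measurable p) (hp0 : ∀ x, 0 ≤ p x)
    (hlaw : P.map X = μ.withDensity fun x => ENNReal.ofReal (p x)) (hh : Measurable h) :
    ∫ ω, h (X ω) ∂P = ∫ x, p x * h x ∂μ := by
  rw [← integral_map hX.aemeasurable hh.aestronglyMeasurable, hlaw,
    integral_withDensity_eq_integral_toReal_smul hp.ennreal_ofReal (by simp)]
  simp [ENNReal.toReal_ofReal (hp0 _)]

lemma integrable_and_integral_sum_comp_eq {s : Finset ι} {c : ι → ℝ} (hc : ∀ j ∈ s, 0 < c j)
    {X : ι → Ω → Θ} {p : ι → Θ → ℝ} {h : Θ → ℝ} (hX : ∀ j ∈ s, Measurable (X j))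
    (hp : ∀ j ∈ s, Measurable (p j)) (hp0 : ∀ j ∈ s, ∀ x, 0 ≤ p j x)
    (hlaw : ∀ j ∈ s, P.map (X j) = μ.withDensity fun x => ENNReal.ofReal (p j x))
    (hh : Measurable h) (hh0 : ∀ x, 0 ≤ h x)
    (hint : Integrable (fun x => (∑ j ∈ s, c j * p j x) * h x) μ) :
    Integrable (fun ω => ∑ j ∈ s, c j * h (X j ω)) P ∧
      ∫ ω, ∑ j ∈ s, c j * h (X j ω) ∂P = ∫ x, (∑ j ∈ s, c j * p j x) * h x ∂μ := by
  have hint_j : ∀ j ∈ s, Integrable (fun x => p j x * h x) μ := fun j hj => by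
    refine (hint.const_mul (c j)⁻¹).mono' ((hp j hj).mul hh).aestronglyMeasurable
      (.of_forall fun x => ?_)
    have hpj : c j * p j x ≤ ∑ k ∈ s, c k * p k x :=
      single_le_sum (fun k hk => mul_nonneg (hc k hk).le (hp0 k hk x)) hj
    rw [Real.norm_of_nonneg (mul_nonneg (hp0 j hj x) (hh0 x)), le_inv_mul_iff₀ (hc j hj),
      ← mul_assoc]
    exact mul_le_mul_of_nonneg_right hpj (hh0 x)
  have hcomp : ∀ j ∈ s, Integrable (fun ω => h (X j ω)) P := fun j hj =>
    integrable_comp_of_map_eq_withDensity (hX j hj) (hp j hj) (hp0 j hj) (hlaw j hj) hh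
      (hint_j j hj)
  refine ⟨integrable_finsetSum _ fun j hj => (hcomp j hj).const_mul _, ?_⟩
  simp_rw [sum_mul, mul_assoc]
  rw [integral_finsetSum _ fun j hj => (hcomp j hj).const_mul _,
    integral_finsetSum _ fun j hj => (hint_j j hj).const_mul _]
  refine sum_congr rfl fun j hj => ?_
  rw [integral_const_mul, integral_const_mul,
    integral_comp_of_map_eq_withDensity (hX j hj) (hp j hj) (hp0 j hj) (hlaw j hj) hh]

lemma integrable_and_integral_sum_sq_div_mixture {s : Finset ι} {c : ι → ℝ}
    (hc : ∀ j ∈ s, 0 < c j) {X : ι → Ω → Θ} {p : ι → Θ → ℝ} {g : Θ → ℝ}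
    (hX : ∀ j ∈ s, Measurable (X j)) (hp : ∀ j ∈ s, Measurable (p j))
    (hp0 : ∀ j ∈ s, ∀ x, 0 ≤ p j x)
    (hlaw : ∀ j ∈ s, P.map (X j) = μ.withDensity fun x => ENNReal.ofReal (p j x))
    (hg : Measurable g) (hint : Integrable (fun x => g x ^ 2 / ∑ j ∈ s, c j * p j x) μ) :
    Integrable (fun ω => ∑ j ∈ s, c j * (g (X j ω) / ∑ k ∈ s, c k * p k (X j ω)) ^ 2) P ∧
      ∫ ω, ∑ j ∈ s, c j * (g (X j ω) / ∑ k ∈ s, c k * p k (X j ω)) ^ 2 ∂P =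
        ∫ x, g x ^ 2 / ∑ j ∈ s, c j * p j x ∂μ := by
  have hD : Measurable fun x => ∑ j ∈ s, c j * p j x :=
    Finset.measurable_sum _ fun j hj => (hp j hj).const_mul _
  have hsq : ∀ x, (∑ j ∈ s, c j * p j x) * (g x / ∑ j ∈ s, c j * p j x) ^ 2 =
      g x ^ 2 / ∑ j ∈ s, c j * p j x := fun x => by
    rcases eq_or_ne (∑ j ∈ s, c j * p j x) 0 with h | h
    · simp [h]
    · field_simp
  obtain ⟨hint', heq⟩ := integrable_and_integral_sum_comp_eq hc hX hp hp0 hlaw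
    ((hg.div hD).pow_const 2) (fun x => sq_nonneg _)
    (hint.congr (.of_forall fun x => (hsq x).symm))
  exact ⟨hint', heq.trans (integral_congr_ae (.of_forall hsq))⟩

end ChangeOfVariables

section Deviation

variable {Ω : Type*} [MeasurableSpace Ω] {μ : Measure Ω} {X : Ω → ℝ}

/-- **Cantelli's inequality**. -/
theorem meas_ge_le_variance_div_variance_add_sq [IsProbabilityMeasure μ] (hX : MemLp X 2 μ)
    {c : ℝ} (hc : 0 < c) :
    μ {ω | c ≤ X ω - μ[X]} ≤ ENNReal.ofReal (Var[X; μ] / (Var[X; μ] + c ^ 2)) := by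
  set v := Var[X; μ]
  have hv : 0 ≤ v := variance_nonneg X μ
  -- Markov's inequality for `(X - μ[X] + t) ^ 2` at the optimal shift `t = v / c`
  set t := v / c
  have ht : 0 ≤ t := div_nonneg hv hc.le
  set Y : Ω → ℝ := fun ω => X ω + (t - μ[X])
  have hY : MemLp Y 2 μ := hX.add (memLp_const _)
  have hEY : μ[Y] = t := by
    simp only [Y]
    rw [integral_add (hX.integrable one_le_two) (integrable_const _)]
    simp
  have hEY2 : μ[Y ^ 2] = v + t ^ 2 := by
    have hvar : Var[Y; μ] = v := variance_add_const hX.aestronglyMeasurable _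
    rw [variance_eq_sub hY, hEY] at hvar
    linarith
  have hsub : {ω | c ≤ X ω - μ[X]} ⊆ {ω | (c + t) ^ 2 ≤ (Y ^ 2) ω} := by
    intro ω hω
    simp only [Set.mem_ofPred_eq, Pi.pow_apply, Y] at hω ⊢
    nlinarith
  have hct : 0 < (c + t) ^ 2 := by positivity
  have hmarkov : (c + t) ^ 2 * μ.real {ω | (c + t) ^ 2 ≤ (Y ^ 2) ω} ≤ μ[Y ^ 2] :=
    mul_meas_ge_le_integral_of_nonneg (.of_forall fun ω => sq_nonneg (Y ω)) hY.integrable_sq _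
  have hratio : (v + t ^ 2) / (c + t) ^ 2 = v / (v + c ^ 2) := by
    rw [div_eq_div_iff hct.ne' (by positivity)]
    simp only [t]
    field_simp
    ring
  calc μ {ω | c ≤ X ω - μ[X]} ≤ μ {ω | (c + t) ^ 2 ≤ (Y ^ 2) ω} := measure_mono hsub
    _ = ENNReal.ofReal (μ.real {ω | (c + t) ^ 2 ≤ (Y ^ 2) ω}) :=
        (ofReal_measureReal (measure_ne_top _ _)).symm
    _ ≤ ENNReal.ofReal (v / (v + c ^ 2)) := by
      refine ENNReal.ofReal_le_ofReal ?_
      rw [← hratio, ← hEY2, le_div_iff₀ hct, mul_comm]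
      exact hmarkov

lemma memLp_two_of_ae_sq_le {Y : Ω → ℝ} (hX : AEStronglyMeasurable X μ) (hY : Integrable Y μ)
    (h : ∀ᵐ ω ∂μ, X ω ^ 2 ≤ Y ω) : MemLp X 2 μ :=
  (memLp_two_iff_integrable_sq hX).2 <| hY.mono' (hX.pow 2) <| h.mono fun ω hω => by
    simpa [abs_of_nonneg (sq_nonneg (X ω))] using hω

lemma variance_le_integral_of_ae_sq_le [IsProbabilityMeasure μ] {Y : Ω → ℝ}
    (hX : AEStronglyMeasurable X μ) (hY : Integrable Y μ) (h : ∀ᵐ ω ∂μ, X ω ^ 2 ≤ Y ω) :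
    Var[X; μ] ≤ ∫ ω, Y ω ∂μ :=
  (variance_le_expectation_sq hX).trans <|
    integral_mono_ae (memLp_two_of_ae_sq_le hX hY h).integrable_sq hY h

theorem ofReal_one_sub_le_measure_sub_integral_le [IsProbabilityMeasure μ] (hX : MemLp X 2 μ)
    {v : ℝ} (hv : Var[X; μ] ≤ v) {δ : ℝ} (hδ : δ ∈ Set.Ioo 0 1) :
    ENNReal.ofReal (1 - δ) ≤ μ {ω | X ω - μ[X] ≤ √((1 - δ) / δ * v)} := by
  obtain ⟨hδ0, hδ1⟩ := hδ
  set c := √((1 - δ) / δ * v)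
  suffices htail : μ {ω | X ω - μ[X] ≤ c}ᶜ ≤ ENNReal.ofReal δ by
    rw [ENNReal.ofReal_sub _ hδ0.le, ENNReal.ofReal_one, tsub_le_iff_right]
    calc 1 = μ Set.univ := measure_univ.symm
      _ ≤ _ := measure_univ_le_add_compl _
      _ ≤ _ := add_le_add le_rfl htail
  rcases le_or_gt v 0 with hv0 | hv0
  · have hX0 := ae_eq_integral_of_variance_eq_zero hX
      (le_antisymm (hv.trans hv0) (variance_nonneg X μ))
    have hnull : μ {ω | X ω - μ[X] ≤ c}ᶜ = 0 := ae_iff.1 <| by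
      filter_upwards [hX0] with ω hω
      simp [hω, c]
    exact hnull.le.trans zero_le
  have h1δ : 0 < 1 - δ := by linarith
  have hc : 0 < c := Real.sqrt_pos.2 (by positivity)
  have hc2 : δ * c ^ 2 = (1 - δ) * v := by
    rw [Real.sq_sqrt (by positivity)]
    field_simp
  refine (measure_mono fun ω hω => ?_).trans
    ((meas_ge_le_variance_div_variance_add_sq hX hc).trans (ENNReal.ofReal_le_ofReal ?_))
  · simp only [Set.mem_compl_iff, Set.mem_ofPred_eq, not_le] at hω ⊢
    exact hω.le
  · have hv : 0 ≤ Var[X; μ] := variance_nonneg X μ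
    rw [div_le_iff₀ (by positivity)]
    nlinarith

end Deviation

theorem high_probability_lower_bound_general
    {Θ : Type*} [MeasurableSpace Θ] (μ : Measure Θ)
    {Ω : Type*} [MeasurableSpace Ω] (P : Measure Ω) [IsProbabilityMeasure P]
    (T : ℤ) (α β : ℕ) (hα : 0 < α)
    (ν : ℤ → Θ → ℝ)
    (hνmeas : ∀ t, Measurable (ν t))
    (hνpos : ∀ t θ, 0 < ν t θ)
    (θt : ℕ → Ω → Θ) (hθmeas : ∀ j, Measurable (θt j))
    (hθlaw : ∀ j ∈ Finset.range α,
      P.map (θt j) = μ.withDensity (fun x => ENNReal.ofReal (ν (T - j) x)))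
    (rt : ℕ → Ω → ℝ) (hrmeas : ∀ j, Measurable (rt j))
    (Rmax : ℝ) (hr : ∀ j ∈ Finset.range α, ∀ᵐ ωe ∂P, |rt j ωe| ≤ Rmax)
    (γ ω : ℝ) (hγ : γ ∈ Set.Ioc (0 : ℝ) 1) (hω : ω ∈ Set.Ioc (0 : ℝ) 1)
    (Cγα Cω : ℝ)
    (hCγα : Cγα = if γ < 1 then (1 - γ ^ α) / (1 - γ) else (α : ℝ))
    (hCω : Cω = if ω < 1 then (1 - ω ^ α) / (1 - ω) else (α : ℝ))
    (hd2fin : ∀ i ∈ Finset.range β, ∀ j ∈ Finset.range α,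
      Integrable (fun x => (ν (T + 1 + i) x) ^ 2 / ν (T - j) x) μ)
    (hd2pos : ∀ i ∈ Finset.range β, ∀ j ∈ Finset.range α,
      0 < ∫ x, (ν (T + 1 + i) x) ^ 2 / ν (T - j) x ∂μ)
    (Jbar : Ω → ℝ)
    (hJbar : ∀ ωe, Jbar ωe =
      ((1 / Cω) * ∑ j ∈ Finset.range α, ω ^ j * γ ^ (α - 1 - j) * rt j ωe)
      + ∑ j ∈ Finset.range α, ω ^ j * rt j ωe *
          ((∑ i ∈ Finset.range β, γ ^ i * ν (T + 1 + i) (θt j ωe)) /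
            ∑ k ∈ Finset.range α, ω ^ k * ν (T - k) (θt j ωe)))
    (B : ℝ)
    (hB : B = (∑ i ∈ Finset.range β, γ ^ i /
        Real.sqrt (∑ j ∈ Finset.range α,
          ω ^ j / ∫ x, (ν (T + 1 + i) x) ^ 2 / ν (T - j) x ∂μ)) ^ 2)
    (δ : ℝ) (hδ : δ ∈ Set.Ioo (0 : ℝ) 1) :
    ENNReal.ofReal (1 - δ) ≤
      P {ωe | (∫ ωe', Jbar ωe' ∂P) ≥ Jbar ωe -
        Real.sqrt (((1 - δ) / δ) * 2 * Rmax ^ 2 * (Cγα ^ 2 + Cω * B))} := by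
  obtain ⟨hγ0, hγ1⟩ := hγ
  obtain ⟨hω0, hω1⟩ := hω
  rw [ite_eq_sum_range_pow hγ1] at hCγα
  rw [ite_eq_sum_range_pow hω1] at hCω
  set D : Θ → ℝ := fun x => ∑ k ∈ range α, ω ^ k * ν (T - k) x
  set G : Θ → ℝ := fun x => ∑ i ∈ range β, γ ^ i * ν (T + 1 + i) x
  obtain ⟨hGD_int, hGD⟩ := integral_sq_mixture_div_mixture_le (μ := μ) (s := range β)
    (nonempty_range_iff.2 hα.ne') (fun i _ => pow_nonneg hγ0.le i) (fun j _ => pow_pos hω0 j)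
    (fun i _ => hνmeas _) (fun j _ => hνmeas _) (fun j _ => hνpos _) hd2fin hd2pos
  obtain ⟨hW_int, hW⟩ := integrable_and_integral_sum_sq_div_mixture (P := P) (g := G)
    (fun j _ => pow_pos hω0 j) (fun j _ => hθmeas j) (fun j _ => hνmeas _)
    (fun j _ x => (hνpos _ x).le) hθlaw (by fun_prop) hGD_int
  set W : Ω → ℝ := fun ωe => ∑ j ∈ range α, ω ^ j * (G (θt j ωe) / D (θt j ωe)) ^ 2
  have hJ_sq : ∀ᵐ ωe ∂P, Jbar ωe ^ 2 ≤ 2 * Rmax ^ 2 * (Cγα ^ 2 + Cω * W ωe) := by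
    filter_upwards [(Filter.eventually_all_finset _).2 hr] with ωe hωe
    rw [hJbar, hCγα, hCω]
    exact sq_estimator_le hα hγ0.le hω0 hω1 hωe
  have hJ_meas : Measurable Jbar := by
    rw [funext hJbar]
    fun_prop
  have hbound_int : Integrable (fun ωe => 2 * Rmax ^ 2 * (Cγα ^ 2 + Cω * W ωe)) P :=
    ((integrable_const _).add (hW_int.const_mul _)).const_mul _
  have hvar : Var[Jbar; P] ≤ 2 * Rmax ^ 2 * (Cγα ^ 2 + Cω * B) := by
    refine (variance_le_integral_of_ae_sq_le hJ_meas.aestronglyMeasurable hbound_int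
      hJ_sq).trans ?_
    rw [integral_const_mul, integral_add (integrable_const _) (hW_int.const_mul _),
      integral_const, integral_const_mul, hW]
    simp only [probReal_univ, smul_eq_mul, one_mul]
    have hCω0 : 0 ≤ Cω := hCω ▸ sum_nonneg fun j _ => pow_nonneg hω0.le j
    gcongr
    exact hB ▸ hGD
  convert ofReal_one_sub_le_measure_sub_integral_le
    (memLp_two_of_ae_sq_le hJ_meas.aestronglyMeasurable hbound_int hJ_sq) hvar hδ using 2
  ext ωe
  rw [Set.mem_ofPred_eq, Set.mem_ofPred_eq, ge_iff_le, sub_le_comm, mul_assoc ((1 - δ) / δ),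
    mul_assoc ((1 - δ) / δ)]

/-- High-probability lower bound on the expected objective. -/
theorem high_probability_lower_bound
    {Θ : Type*} [MeasurableSpace Θ] (μ : Measure Θ)
    {Ω : Type*} [MeasurableSpace Ω] (P : Measure Ω) [IsProbabilityMeasure P]
    (T : ℤ) (α β : ℕ) (hα : 0 < α) (hβ : 0 < β) (hT : (α : ℤ) ≤ T)
    (ν : ℤ → Θ → ℝ)
    (hνmeas : ∀ t, Measurable (ν t))
    (hνpos : ∀ t θ, 0 < ν t θ)
    (hνint : ∀ t, ∫ θ, ν t θ ∂μ = 1)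
    (θt : ℕ → Ω → Θ) (hθmeas : ∀ j, Measurable (θt j))
    (hθlaw : ∀ j ∈ Finset.range α,
      P.map (θt j) = μ.withDensity (fun x => ENNReal.ofReal (ν (T - j) x)))
    (rt : ℕ → Ω → ℝ) (hrmeas : ∀ j, Measurable (rt j))
    (Rmax : ℝ) (hr : ∀ j ∈ Finset.range α, ∀ᵐ ωe ∂P, |rt j ωe| ≤ Rmax)
    (γ ω : ℝ) (hγ : γ ∈ Set.Ioc (0 : ℝ) 1) (hω : ω ∈ Set.Ioc (0 : ℝ) 1)
    (Cγα Cω : ℝ)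
    (hCγα : Cγα = if γ < 1 then (1 - γ ^ α) / (1 - γ) else (α : ℝ))
    (hCω : Cω = if ω < 1 then (1 - ω ^ α) / (1 - ω) else (α : ℝ))
    (hd2fin : ∀ i ∈ Finset.range β, ∀ j ∈ Finset.range α,
      Integrable (fun x => (ν (T + 1 + i) x) ^ 2 / ν (T - j) x) μ)
    (hd2pos : ∀ i ∈ Finset.range β, ∀ j ∈ Finset.range α,
      0 < ∫ x, (ν (T + 1 + i) x) ^ 2 / ν (T - j) x ∂μ)
    (Jbar : Ω → ℝ)
    (hJbar : ∀ ωe, Jbar ωe =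
      ((1 / Cω) * ∑ j ∈ Finset.range α, ω ^ j * γ ^ (α - 1 - j) * rt j ωe)
      + ∑ j ∈ Finset.range α, ω ^ j * rt j ωe *
          ((∑ i ∈ Finset.range β, γ ^ i * ν (T + 1 + i) (θt j ωe)) /
            ∑ k ∈ Finset.range α, ω ^ k * ν (T - k) (θt j ωe)))
    (B : ℝ)
    (hB : B = (∑ i ∈ Finset.range β, γ ^ i /
        Real.sqrt (∑ j ∈ Finset.range α,
          ω ^ j / ∫ x, (ν (T + 1 + i) x) ^ 2 / ν (T - j) x ∂μ)) ^ 2)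
    (δ : ℝ) (hδ : δ ∈ Set.Ioo (0 : ℝ) 1) :
    ENNReal.ofReal (1 - δ) ≤
      P {ωe | (∫ ωe', Jbar ωe' ∂P) ≥ Jbar ωe -
        Real.sqrt (((1 - δ) / δ) * 2 * Rmax ^ 2 * (Cγα ^ 2 + Cω * B))} :=
  high_probability_lower_bound_general μ P T α β hα ν hνmeas hνpos θt hθmeas hθlaw rt hrmeas Rmax hr
    γ ω hγ hω Cγα Cω hCγα hCω hd2fin hd2pos Jbar hJbar B hB δ hδ
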